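/- Sauer–Shelah bound: let F be a set of functions from Fin n → Bool (equivalently, a family of subsets of an n-element set). If F does not shatter any subset of Fin n of size d + 1, then |F| ≤ ∑_{j=0}^{d} C(n, j). -/
import Mathlib

/-- F shatters A if every subset of A is cut out on A by the true-set of some f ∈ F. -/
def Shatters {n : ℕ} (F : Finset (Fin n → Bool)) (A : Finset (Fin n)) : Prop :=
  ∀ A₀ ⊆ A, ∃ f ∈ F, ∀ i ∈ A, (f i = true ↔ i ∈ A₀)

/-- Sauer–Shelah: if F shatters no subset of Fin n of size d+1, then
|F| ≤ ∑_{j=0}^{d} C(n,j). -/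
theorem stmt_7 (n d : ℕ) (F : Finset (Fin n → Bool))
    (h : ∀ A : Finset (Fin n), A.card = d + 1 → ¬ Shatters F A) :
    F.card ≤ ∑ j ∈ Finset.range (d + 1), n.choose j := by
  classical
  set 𝒜 : Finset (Finset (Fin n)) :=
    F.image (fun f => Finset.univ.filter (fun i => f i = true)) with h𝒜
  have hcard : 𝒜.card = F.card := by
    rw [h𝒜]
    apply Finset.card_image_of_injective
    intro f g hfg
    funext i
    have : (i ∈ Finset.univ.filter (fun j => f j = true)) ↔
        (i ∈ Finset.univ.filter (fun j => g j = true)) := by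
      simp only at hfg; rw [hfg]
    simp only [Finset.mem_filter, Finset.mem_univ, true_and] at this
    cases hf : f i <;> cases hg : g i <;> simp_all
  -- transfer shattering
  have hsh : ∀ A : Finset (Fin n), 𝒜.Shatters A → Shatters F A := by
    intro A hA A₀ hA₀
    obtain ⟨u, hu, huA⟩ := hA hA₀
    rw [h𝒜, Finset.mem_image] at hu
    obtain ⟨f, hf, rfl⟩ := hu
    refine ⟨f, hf, fun i hi => ?_⟩
    constructor
    · intro hfi
      have : i ∈ A ∩ Finset.univ.filter (fun j => f j = true) := by
        simp [hi, hfi]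
      rwa [huA] at this
    · intro hiA₀
      have := huA ▸ hiA₀
      simp only [Finset.mem_inter, Finset.mem_filter] at this
      exact this.2.2
  have hvc : 𝒜.vcDim ≤ d := by
    by_contra hvc
    push_neg at hvc
    obtain ⟨s, hs⟩ := Finset.exists_mem_eq_sup 𝒜.shatterer
      (by
        rcases Finset.eq_empty_or_nonempty 𝒜.shatterer with he | hne
        · rw [Finset.vcDim, he] at hvc; simp at hvc
        · exact hne) Finset.card
    have hscard : d + 1 ≤ s.card := by
      have h2 := hs.2
      rw [Finset.vcDim] at hvc
      omega
    obtain ⟨t, hts, htcard⟩ := Finset.exists_subset_card_eq hscard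
    exact h t htcard (hsh t ((Finset.mem_shatterer.1 hs.1).mono_right hts))
  calc F.card = 𝒜.card := hcard.symm
    _ ≤ 𝒜.shatterer.card := Finset.card_le_card_shatterer 𝒜
    _ ≤ ∑ k ∈ Finset.Iic 𝒜.vcDim, (Fintype.card (Fin n)).choose k :=
        Finset.card_shatterer_le_sum_vcDim
    _ ≤ ∑ j ∈ Finset.range (d + 1), n.choose j := by
        rw [Fintype.card_fin]
        apply Finset.sum_le_sum_of_subset
        intro k hk
        simp only [Finset.mem_Iic, Finset.mem_range] at *
        omega
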